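/- arXiv:2212.06803 — 4 statements merged into one kernel-verified Lean document; each statement's English description precedes it below -/
import Mathlib

section
/- Let ℓ_1, …, ℓ_N : ℝ^D → ℝ be twice continuously differentiable functions, let θ : ℝ^N → ℝ^D be differentiable at the all-ones vector 1 ∈ ℝ^N and satisfy ∑_{n=1}^N w_n ∇ℓ_n(θ(w)) = 0 for all w in a neighborhood of 1, and let H = ∑_{n=1}^N ∇²ℓ_n(θ(1)) be invertible. Let M : ℝ^D → ℝ be differentiable at θ̂ = θ(1). Then for every n, the derivative of the composite w ↦ M(θ(w)) with respect to the n-th weight at w = 1 equals −∇M(θ̂)ᵀ H^{-1} g_n, where g_n = ∇ℓ_n(θ̂). (Influence of a training instance on a differentiable functional, Equation (5).) -/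
open RealInnerProductSpace

/-! Differentiating the stationarity identity `∑ₘ wₘ ∇ℓₘ(θ(w)) = 0` in `wₙ` at `w = 1` gives
`H (θ'(1) eₙ) + ∇ℓₙ(θ̂) = 0`, so `θ'(1) eₙ = -H⁻¹ ∇ℓₙ(θ̂)`. The chain rule and the Riesz
representation `dM(θ̂) = ⟪∇M(θ̂), ·⟫` then give the formula. -/

theorem ContDiff.differentiable_gradient {F : Type*} [NormedAddCommGroup F]
    [InnerProductSpace ℝ F] [CompleteSpace F] {f : F → ℝ} (hf : ContDiff ℝ 2 f) :
    Differentiable ℝ (gradient f) :=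
  (InnerProductSpace.toDual ℝ F).symm.toContinuousLinearEquiv.differentiable.comp
    ((hf.fderiv_right (m := 1) (by norm_num)).differentiable (by norm_num))

section WeightedStationarity

variable {ι E F : Type*} [Fintype ι]
  [NormedAddCommGroup E] [NormedSpace ℝ E] [NormedAddCommGroup F] [NormedSpace ℝ F]
  {G : ι → E → F} {θ : (ι → ℝ) → E} {w₀ : ι → ℝ}

theorem hasFDerivAt_sum_smul_comp (hθ : DifferentiableAt ℝ θ w₀)
    (hG : ∀ m, DifferentiableAt ℝ (G m) (θ w₀)) :
    HasFDerivAt (fun w => ∑ m, w m • G m (θ w))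
      (∑ m, (w₀ m • (fderiv ℝ (G m) (θ w₀)).comp (fderiv ℝ θ w₀)
        + (ContinuousLinearMap.proj m : (ι → ℝ) →L[ℝ] ℝ).smulRight (G m (θ w₀)))) w₀ :=
  HasFDerivAt.fun_sum fun m _ =>
    (ContinuousLinearMap.proj m).hasFDerivAt.smul ((hG m).hasFDerivAt.comp w₀ hθ.hasFDerivAt)

theorem sum_smul_fderiv_apply_fderiv_single_eq_neg [DecidableEq ι]
    (hθ : DifferentiableAt ℝ θ w₀)
    (hG : ∀ m, DifferentiableAt ℝ (G m) (θ w₀))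
    (hstat : ∀ᶠ w in nhds w₀, ∑ m, w m • G m (θ w) = 0) (n : ι) :
    (∑ m, w₀ m • fderiv ℝ (G m) (θ w₀)) (fderiv ℝ θ w₀ (Pi.single n 1)) = -G n (θ w₀) := by
  have hzero := (hasFDerivAt_sum_smul_comp hθ hG).unique
    ((hasFDerivAt_const (0 : F) w₀).congr_of_eventuallyEq hstat)
  simpa [Finset.sum_add_distrib, Pi.single_apply, eq_neg_iff_add_eq_zero] using
    congrArg (· (Pi.single n 1)) hzero

end WeightedStationarity

theorem influence_on_functional_formula_general
    (D N : ℕ)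
    (ℓ : Fin N → EuclideanSpace ℝ (Fin D) → ℝ)
    (hℓ : ∀ n, ContDiff ℝ 2 (ℓ n))
    (θ : (Fin N → ℝ) → EuclideanSpace ℝ (Fin D))
    (hθ : DifferentiableAt ℝ θ 1)
    (hstat : ∀ᶠ w in nhds (1 : Fin N → ℝ),
      ∑ n, w n • gradient (ℓ n) (θ w) = 0)
    (H Hinv : EuclideanSpace ℝ (Fin D) →L[ℝ] EuclideanSpace ℝ (Fin D))
    (hH : H = ∑ n, fderiv ℝ (gradient (ℓ n)) (θ 1))
    (hHinv₂ : Hinv.comp H = ContinuousLinearMap.id ℝ (EuclideanSpace ℝ (Fin D)))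
    (M : EuclideanSpace ℝ (Fin D) → ℝ)
    (hM : DifferentiableAt ℝ M (θ 1)) :
    ∀ n : Fin N, fderiv ℝ (fun w => M (θ w)) 1 (Pi.single n 1) =
      -⟪gradient M (θ 1), Hinv (gradient (ℓ n) (θ 1))⟫ := by
  intro n
  have hH_dθ : H (fderiv ℝ θ 1 (Pi.single n 1)) = -gradient (ℓ n) (θ 1) := by
    simpa [hH] using sum_smul_fderiv_apply_fderiv_single_eq_neg hθ
      (fun m => (hℓ m).differentiable_gradient _) hstat n
  have hdθ : fderiv ℝ θ 1 (Pi.single n 1) = -Hinv (gradient (ℓ n) (θ 1)) := by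
    rw [← map_neg, ← hH_dθ, ← ContinuousLinearMap.comp_apply, hHinv₂,
      ContinuousLinearMap.id_apply]
  rw [show (fun w => M (θ w)) = M ∘ θ from rfl, fderiv_comp 1 hM hθ,
    ContinuousLinearMap.comp_apply, hdθ, map_neg, inner_gradient_left]

/-- Influence of a training instance on a differentiable functional
(Equation (5)): under the weighted stationarity condition and invertibility of
the Hessian `H = ∑ n, ∇²ℓ n (θ 1)`, for any functional `M` differentiable at
`θ̂ = θ 1`, the derivative of `w ↦ M (θ w)` with respect to the `n`-th weight
at `w = 1` equals `-⟪∇M(θ̂), H⁻¹ g n⟫` where `g n = ∇ℓ n (θ̂)`. -/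
theorem influence_on_functional_formula
    (D N : ℕ) (hN : 0 < N)
    (ℓ : Fin N → EuclideanSpace ℝ (Fin D) → ℝ)
    (hℓ : ∀ n, ContDiff ℝ 2 (ℓ n))
    (θ : (Fin N → ℝ) → EuclideanSpace ℝ (Fin D))
    (hθ : DifferentiableAt ℝ θ 1)
    (hstat : ∀ᶠ w in nhds (1 : Fin N → ℝ),
      ∑ n, w n • gradient (ℓ n) (θ w) = 0)
    (H Hinv : EuclideanSpace ℝ (Fin D) →L[ℝ] EuclideanSpace ℝ (Fin D))
    (hH : H = ∑ n, fderiv ℝ (gradient (ℓ n)) (θ 1))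
    (hHinv₁ : H.comp Hinv = ContinuousLinearMap.id ℝ (EuclideanSpace ℝ (Fin D)))
    (hHinv₂ : Hinv.comp H = ContinuousLinearMap.id ℝ (EuclideanSpace ℝ (Fin D)))
    (M : EuclideanSpace ℝ (Fin D) → ℝ)
    (hM : DifferentiableAt ℝ M (θ 1)) :
    ∀ n : Fin N, fderiv ℝ (fun w => M (θ w)) 1 (Pi.single n 1) =
      -⟪gradient M (θ 1), Hinv (gradient (ℓ n) (θ 1))⟫ :=
  influence_on_functional_formula_general D N ℓ hℓ θ hθ hstat H Hinv hH hHinv₂ M hM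
end

section
/- Let λ > 0 be real, N a positive natural number, and g_1, …, g_N ∈ ℝ^D. Define matrices A_0 = λ^{-1} I_D and, for 0 ≤ m < N, A_{m+1} = A_m − (A_m g_{m+1} g_{m+1}ᵀ A_m) / (N + g_{m+1}ᵀ A_m g_{m+1}). Then every A_m is symmetric positive definite, every denominator N + g_{m+1}ᵀ A_m g_{m+1} is strictly positive, and for every m ≤ N, A_m = (λ I_D + (1/N) ∑_{i=1}^{m} g_i g_iᵀ)^{-1}. In particular A_N is the inverse of the damped empirical Fisher matrix λ I_D + (1/N) ∑_{i=1}^{N} g_i g_iᵀ. -/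
/-!
Adding `N⁻¹ g gᵀ` to a matrix is a rank-one update, so by the Sherman–Morrison formula one step of
the recurrence maps the inverse of the partial damped Fisher `λ I + N⁻¹ ∑_{i < m} g_i g_iᵀ` to the
inverse of the next one. All partial damped Fishers are positive definite, hence so are their
inverses, which makes every denominator `N + gᵀ A g` positive and keeps the induction going.
-/

open Matrix

namespace Matrix

theorem PosSemidef.dotProduct_mulVec_self_nonneg {n : Type*} [Fintype n] {M : Matrix n n ℝ}
    (hM : M.PosSemidef) (u : n → ℝ) : 0 ≤ u ⬝ᵥ (M *ᵥ u) := by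
  simpa using hM.dotProduct_mulVec_nonneg u

variable {n K : Type*} [Fintype n] [DecidableEq n] [Field K]

theorem inv_add_inv_smul_vecMulVec {B : Matrix n n K} (hB : IsUnit B) {r : K} (hr : r ≠ 0)
    (u v : n → K) (hd : r + v ⬝ᵥ (B⁻¹ *ᵥ u) ≠ 0) :
    (B + r⁻¹ • vecMulVec u v)⁻¹ =
      B⁻¹ - (r + v ⬝ᵥ (B⁻¹ *ᵥ u))⁻¹ • (B⁻¹ * vecMulVec u v * B⁻¹) := by
  set s := v ⬝ᵥ (B⁻¹ *ᵥ u)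
  have hBB : B⁻¹ * B = 1 := nonsing_inv_mul B ((isUnit_iff_isUnit_det B).mp hB)
  have hsq : vecMulVec u v * (B⁻¹ * vecMulVec u v) = s • vecMulVec u v := by
    rw [← Matrix.mul_assoc, vecMulVec_mul, vecMulVec_mul_vecMulVec, ← dotProduct_mulVec,
      vecMulVec_smul]
  have hcoeff : r⁻¹ - (r + s)⁻¹ - (r + s)⁻¹ * r⁻¹ * s = 0 := by
    field_simp
    ring
  refine inv_eq_left_inv ?_
  calc (B⁻¹ - (r + s)⁻¹ • (B⁻¹ * vecMulVec u v * B⁻¹)) * (B + r⁻¹ • vecMulVec u v)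
      = B⁻¹ * B + (r⁻¹ - (r + s)⁻¹ - (r + s)⁻¹ * r⁻¹ * s) • (B⁻¹ * vecMulVec u v) := by
        simp only [sub_mul, Matrix.mul_add, smul_mul_assoc, Matrix.mul_smul, Matrix.mul_assoc,
          hBB, Matrix.mul_one, hsq]
        module
    _ = 1 := by rw [hBB, hcoeff, zero_smul, add_zero]

end Matrix

section DampedEmpiricalFisher

variable {n : Type*} [DecidableEq n]

noncomputable def dampedEmpiricalFisher (l : ℝ) {N : ℕ} (g : Fin N → n → ℝ) (m : ℕ) :
    Matrix n n ℝ :=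
  l • 1 + ((1 : ℝ) / N) •
    ∑ i ∈ Finset.univ.filter (fun i : Fin N => (i : ℕ) < m), vecMulVec (g i) (g i)

variable {l : ℝ} {N : ℕ} (g : Fin N → n → ℝ)

theorem dampedEmpiricalFisher_zero : dampedEmpiricalFisher l g 0 = l • 1 := by
  simp [dampedEmpiricalFisher]

theorem dampedEmpiricalFisher_succ {m : ℕ} (hm : m < N) :
    dampedEmpiricalFisher l g (m + 1) =
      dampedEmpiricalFisher l g m + (N : ℝ)⁻¹ • vecMulVec (g ⟨m, hm⟩) (g ⟨m, hm⟩) := by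
  have hfilter : Finset.univ.filter (fun i : Fin N => (i : ℕ) < m + 1) =
      insert ⟨m, hm⟩ (Finset.univ.filter (fun i : Fin N => (i : ℕ) < m)) := by
    ext i
    simp [le_iff_eq_or_lt, Fin.ext_iff]
  rw [dampedEmpiricalFisher, dampedEmpiricalFisher, hfilter, Finset.sum_insert (by simp),
    smul_add, one_div]
  abel

theorem dampedEmpiricalFisher_posDef [Fintype n] (hl : 0 < l) (m : ℕ) :
    (dampedEmpiricalFisher l g m).PosDef :=
  (PosDef.one.smul hl).add_posSemidef <|
    (posSemidef_sum _ fun i _ => by simpa using posSemidef_vecMulVec_self_star (g i)).smul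
      (by positivity)

end DampedEmpiricalFisher

theorem woodfisher_recurrence_closed_form_general
    (D : ℕ) (l : ℝ) (hl : 0 < l) (N : ℕ)
    (g : Fin N → Fin D → ℝ)
    (A : ℕ → Matrix (Fin D) (Fin D) ℝ)
    (hA0 : A 0 = l⁻¹ • 1)
    (hA : ∀ m (hm : m < N),
      A (m + 1) = A m -
        ((N : ℝ) + g ⟨m, hm⟩ ⬝ᵥ (A m *ᵥ g ⟨m, hm⟩))⁻¹ •
          (A m * vecMulVec (g ⟨m, hm⟩) (g ⟨m, hm⟩) * A m)) :
    (∀ m ≤ N, (A m).PosDef) ∧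
    (∀ m (hm : m < N), 0 < (N : ℝ) + g ⟨m, hm⟩ ⬝ᵥ (A m *ᵥ g ⟨m, hm⟩)) ∧
    (∀ m ≤ N, A m =
      (l • 1 + ((1 : ℝ) / N) •
        ∑ i ∈ Finset.univ.filter (fun i : Fin N => (i : ℕ) < m),
          vecMulVec (g i) (g i))⁻¹) := by
  have hF := dampedEmpiricalFisher_posDef g hl
  have hden : ∀ m (hm : m < N), (A m).PosDef →
      0 < (N : ℝ) + g ⟨m, hm⟩ ⬝ᵥ (A m *ᵥ g ⟨m, hm⟩) := fun m hm hAm =>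
    add_pos_of_pos_of_nonneg (Nat.cast_pos.mpr (Nat.zero_lt_of_lt hm))
      (hAm.posSemidef.dotProduct_mulVec_self_nonneg _)
  have hclosed : ∀ m ≤ N, A m = (dampedEmpiricalFisher l g m)⁻¹ := by
    intro m
    induction m with
    | zero =>
      intro _
      rw [hA0, dampedEmpiricalFisher_zero]
      exact (inv_eq_left_inv (by simp [smul_smul, hl.ne'])).symm
    | succ m ih =>
      intro hm
      have hAm := ih (Nat.le_of_succ_le hm)
      have hdenm := hden m hm (hAm ▸ (hF m).inv)
      rw [hAm] at hdenm
      rw [hA m hm, dampedEmpiricalFisher_succ g hm, hAm,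
        inv_add_inv_smul_vecMulVec (hF m).isUnit (Nat.cast_pos.mpr (Nat.zero_lt_of_lt hm)).ne'
          _ _ hdenm.ne']
  have hpd : ∀ m ≤ N, (A m).PosDef := fun m hm => hclosed m hm ▸ (hF m).inv
  exact ⟨hpd, fun m hm => hden m hm (hpd m hm.le), hclosed⟩

/-- Closed form of the WoodFisher matrix recurrence: starting from
`A 0 = λ⁻¹ I` and applying the rank-one updates
`A (m+1) = A m - (A m g_{m+1} g_{m+1}ᵀ A m) / (N + g_{m+1}ᵀ A m g_{m+1})`,
every `A m` is symmetric positive definite, every denominator is strictly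
positive, and `A m` equals the inverse of the partially damped empirical
Fisher `λ I + (1/N) ∑_{i=1}^m g_i g_iᵀ`; in particular `A N` is the inverse of
the damped empirical Fisher matrix. -/
theorem woodfisher_recurrence_closed_form
    (D : ℕ) (l : ℝ) (hl : 0 < l) (N : ℕ) (hN : 0 < N)
    (g : Fin N → Fin D → ℝ)
    (A : ℕ → Matrix (Fin D) (Fin D) ℝ)
    (hA0 : A 0 = l⁻¹ • 1)
    (hA : ∀ m (hm : m < N),
      A (m + 1) = A m -
        ((N : ℝ) + g ⟨m, hm⟩ ⬝ᵥ (A m *ᵥ g ⟨m, hm⟩))⁻¹ •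
          (A m * vecMulVec (g ⟨m, hm⟩) (g ⟨m, hm⟩) * A m)) :
    (∀ m ≤ N, (A m).PosDef) ∧
    (∀ m (hm : m < N), 0 < (N : ℝ) + g ⟨m, hm⟩ ⬝ᵥ (A m *ᵥ g ⟨m, hm⟩)) ∧
    (∀ m ≤ N, A m =
      (l • 1 + ((1 : ℝ) / N) •
        ∑ i ∈ Finset.univ.filter (fun i : Fin N => (i : ℕ) < m),
          vecMulVec (g i) (g i))⁻¹) :=
  woodfisher_recurrence_closed_form_general D l hl N g A hA0 hA
end

section
/- Let λ > 0 be real, N a positive natural number, g_1, …, g_N ∈ ℝ^D, and v ∈ ℝ^D. Define A_0 = λ^{-1} I_D and A_{m+1} = A_m − (A_m g_{m+1} g_{m+1}ᵀ A_m) / (N + g_{m+1}ᵀ A_m g_{m+1}) for 0 ≤ m < N, and define vectors k_0 = λ^{-1} v and k_{m+1} = k_m − (A_m g_{m+1}) · (g_{m+1}ᵀ k_m) / (N + g_{m+1}ᵀ A_m g_{m+1}). Then k_m = A_m v for every m ≤ N; in particular, k_N = (λ I_D + (1/N) ∑_{i=1}^{N} g_i g_iᵀ)^{-1} v, i.e.,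 the vector recurrence computes the inverse-Hessian–vector product without ever forming a D×D inverse. (Exact form of the IHVP-WoodFisher recurrence, Proposition 2.) -/
open Matrix

private lemma vmv_mulVec {D : ℕ} (w u x : Fin D → ℝ) :
    vecMulVec w u *ᵥ x = (u ⬝ᵥ x) • w := by
  ext i
  simp only [mulVec, dotProduct, vecMulVec_apply, Pi.smul_apply, smul_eq_mul]
  rw [Finset.sum_mul]
  exact Finset.sum_congr rfl fun j _ => by ring

private lemma mul_vmv {D : ℕ} (M : Matrix (Fin D) (Fin D) ℝ) (w u : Fin D → ℝ) :
    M * vecMulVec w u = vecMulVec (M *ᵥ w) u := by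
  ext i j
  simp only [Matrix.mul_apply, vecMulVec_apply, mulVec, dotProduct, Finset.sum_mul]
  exact Finset.sum_congr rfl fun t _ => by ring

private lemma vmv_mul {D : ℕ} (w u : Fin D → ℝ) (M : Matrix (Fin D) (Fin D) ℝ) :
    vecMulVec w u * M = vecMulVec w (u ᵥ* M) := by
  ext i j
  simp only [Matrix.mul_apply, vecMulVec_apply, vecMul, dotProduct, Finset.mul_sum]
  exact Finset.sum_congr rfl fun t _ => by ring

private lemma vecMul_vmv {D : ℕ} (x w u : Fin D → ℝ) :
    x ᵥ* vecMulVec w u = (x ⬝ᵥ w) • u := by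
  ext j
  simp only [vecMul, dotProduct, vecMulVec_apply, Pi.smul_apply, smul_eq_mul]
  rw [Finset.sum_mul]
  exact Finset.sum_congr rfl fun t _ => by ring

private lemma vmv_smul_right {D : ℕ} (w u : Fin D → ℝ) (r : ℝ) :
    vecMulVec w (r • u) = r • vecMulVec w u := by
  ext i j
  simp only [vecMulVec_apply, Pi.smul_apply, smul_eq_mul, Matrix.smul_apply]
  ring

private lemma vmv_transpose {D : ℕ} (w : Fin D → ℝ) :
    (vecMulVec w w)ᵀ = vecMulVec w w := by
  ext i j
  simp [vecMulVec_apply, mul_comm]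

private lemma sum_mulVec' {D : ℕ} {ι : Type*} (s : Finset ι)
    (M : ι → Matrix (Fin D) (Fin D) ℝ) (x : Fin D → ℝ) :
    (∑ i ∈ s, M i) *ᵥ x = ∑ i ∈ s, M i *ᵥ x := by
  ext j
  simp only [mulVec, dotProduct, Matrix.sum_apply, Finset.sum_apply, Finset.sum_mul]
  exact Finset.sum_comm

private lemma dotProduct_sum' {D : ℕ} {ι : Type*} (s : Finset ι)
    (x : Fin D → ℝ) (w : ι → Fin D → ℝ) :
    x ⬝ᵥ (∑ i ∈ s, w i) = ∑ i ∈ s, x ⬝ᵥ w i := by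
  simp only [dotProduct, Finset.sum_apply, Finset.mul_sum]
  exact Finset.sum_comm

/-- Exact form of the IHVP-WoodFisher recurrence (Proposition 2): with the
WoodFisher matrix estimates `A m` and the vector recurrence
`k (m+1) = k m - (A m g_{m+1}) (g_{m+1}ᵀ k m) / (N + g_{m+1}ᵀ A m g_{m+1})`
initialized at `k 0 = λ⁻¹ v`, we have `k m = A m v` for all `m ≤ N`; in
particular `k N = (λ I + (1/N) ∑ i, g i (g i)ᵀ)⁻¹ v`, so the recurrence
computes the inverse-Hessian–vector product without forming a `D × D`
inverse. -/
theorem ihvp_woodfisher_exact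
    (D : ℕ) (l : ℝ) (hl : 0 < l) (N : ℕ) (hN : 0 < N)
    (g : Fin N → Fin D → ℝ) (v : Fin D → ℝ)
    (A : ℕ → Matrix (Fin D) (Fin D) ℝ)
    (hA0 : A 0 = l⁻¹ • 1)
    (hA : ∀ m (hm : m < N),
      A (m + 1) = A m -
        ((N : ℝ) + g ⟨m, hm⟩ ⬝ᵥ (A m *ᵥ g ⟨m, hm⟩))⁻¹ •
          (A m * vecMulVec (g ⟨m, hm⟩) (g ⟨m, hm⟩) * A m))
    (k : ℕ → Fin D → ℝ)
    (hk0 : k 0 = l⁻¹ • v)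
    (hk : ∀ m (hm : m < N),
      k (m + 1) = k m -
        ((g ⟨m, hm⟩ ⬝ᵥ k m) / ((N : ℝ) + g ⟨m, hm⟩ ⬝ᵥ (A m *ᵥ g ⟨m, hm⟩))) •
          (A m *ᵥ g ⟨m, hm⟩)) :
    (∀ m ≤ N, k m = A m *ᵥ v) ∧
    k N = (l • 1 + ((1 : ℝ) / N) • ∑ i, vecMulVec (g i) (g i))⁻¹ *ᵥ v := by
  have hNpos : (0 : ℝ) < (N : ℝ) := by exact_mod_cast hN
  set B : ℕ → Matrix (Fin D) (Fin D) ℝ := fun m =>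
    l • 1 + (N : ℝ)⁻¹ • ∑ i : Fin N, if (i : ℕ) < m then vecMulVec (g i) (g i) else 0
    with hBdef
  -- the successor step for B
  have hBsucc : ∀ m (hm : m < N),
      B (m + 1) = B m + (N : ℝ)⁻¹ • vecMulVec (g ⟨m, hm⟩) (g ⟨m, hm⟩) := by
    intro m hm
    have hsum : (∑ i : Fin N, if (i : ℕ) < m + 1 then vecMulVec (g i) (g i) else 0)
        = (∑ i : Fin N, if (i : ℕ) < m then vecMulVec (g i) (g i) else 0)
          + vecMulVec (g ⟨m, hm⟩) (g ⟨m, hm⟩) := by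
      have h : ∀ i : Fin N, (if (i : ℕ) < m + 1 then vecMulVec (g i) (g i) else 0)
          = (if (i : ℕ) < m then vecMulVec (g i) (g i) else 0)
            + (if i = ⟨m, hm⟩ then vecMulVec (g i) (g i) else 0) := by
        intro i
        rcases lt_trichotomy (i : ℕ) m with h' | h' | h'
        · have h1 : (i : ℕ) ≠ m := h'.ne
          simp [Nat.lt_succ_of_lt h', h', Fin.ext_iff, h1]
        · simp [Fin.ext_iff, h', Nat.lt_irrefl]
        · have h1 : ¬ (i : ℕ) < m + 1 := by omega
          have h2 : ¬ (i : ℕ) < m := by omega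
          have h3 : (i : ℕ) ≠ m := by omega
          simp [h1, h2, Fin.ext_iff, h3]
      rw [Finset.sum_congr rfl fun i _ => h i, Finset.sum_add_distrib,
        Finset.sum_ite_eq' Finset.univ (⟨m, hm⟩ : Fin N)]
      simp
    simp only [hBdef, hsum, smul_add, add_assoc]
  -- nonnegativity of the quadratic form of B
  have hBpos : ∀ m (x : Fin D → ℝ), 0 ≤ x ⬝ᵥ (B m *ᵥ x) := by
    intro m x
    have h1 : B m *ᵥ x = l • x + (N : ℝ)⁻¹ •
        ((∑ i : Fin N, if (i : ℕ) < m then vecMulVec (g i) (g i) else 0) *ᵥ x) := by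
      simp [hBdef, add_mulVec, smul_mulVec, one_mulVec]
    rw [h1, dotProduct_add, dotProduct_smul, dotProduct_smul]
    have h2 : (0 : ℝ) ≤ x ⬝ᵥ x := Finset.sum_nonneg fun i _ => mul_self_nonneg _
    have h3 : (0 : ℝ) ≤ x ⬝ᵥ ((∑ i : Fin N,
        if (i : ℕ) < m then vecMulVec (g i) (g i) else 0) *ᵥ x) := by
      rw [sum_mulVec', dotProduct_sum']
      refine Finset.sum_nonneg fun i _ => ?_
      by_cases h : (i : ℕ) < m
      · simp only [if_pos h, vmv_mulVec, dotProduct_smul, smul_eq_mul]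
        rw [dotProduct_comm]
        exact mul_self_nonneg _
      · simp [if_neg h]
    have h4 : (0 : ℝ) ≤ (N : ℝ)⁻¹ := le_of_lt (inv_pos.mpr hNpos)
    have := mul_nonneg h4 h3
    have := mul_nonneg hl.le h2
    simp only [smul_eq_mul]
    linarith
  -- main invariant: A m is a (symmetric) two-sided inverse of B m
  have key : ∀ m, m ≤ N → A m * B m = 1 ∧ (A m)ᵀ = A m := by
    intro m
    induction m with
    | zero =>
      intro _
      constructor
      · have hsum : (∑ i : Fin N,
            if (i : ℕ) < 0 then vecMulVec (g i) (g i) else 0) = 0 := by simp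
        rw [hA0]
        simp [hBdef, hsum, smul_smul, mul_inv_cancel₀ (ne_of_gt hl)]
      · rw [hA0]; simp
    | succ m ih =>
      intro hm
      have hmN : m < N := Nat.lt_of_succ_le hm
      obtain ⟨hAB, hAs⟩ := ih (le_of_lt hmN)
      set gm := g ⟨m, hmN⟩ with hgm
      set a := A m *ᵥ gm with ha
      set s := gm ⬝ᵥ a with hs
      have hav : gm ᵥ* A m = a := by rw [← hAs, Matrix.vecMul_transpose, ha]
      have haB : a ᵥ* B m = gm := by
        rw [← hav, Matrix.vecMul_vecMul, hAB, Matrix.vecMul_one]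
      -- s ≥ 0
      have hs0 : 0 ≤ s := by
        have h : a ⬝ᵥ (B m *ᵥ a) = s := by
          rw [Matrix.dotProduct_mulVec, haB, hs]
        rw [← h]
        exact hBpos m a
      have hc : (N : ℝ) + s ≠ 0 := by positivity
      -- the algebraic identities
      have e1 : A m * vecMulVec gm gm * A m = vecMulVec a a := by
        rw [mul_vmv, vmv_mul, ← ha, hav]
      have e2 : A m * vecMulVec gm gm = vecMulVec a gm := by rw [mul_vmv, ← ha]
      have e3 : vecMulVec a a * B m = vecMulVec a gm := by rw [vmv_mul, haB]
      have e4 : vecMulVec a a * vecMulVec gm gm = s • vecMulVec a gm := by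
        rw [vmv_mul, vecMul_vmv, vmv_smul_right, dotProduct_comm, ← hs]
      have hcoef : (N : ℝ)⁻¹ - ((N : ℝ) + s)⁻¹ - ((N : ℝ) + s)⁻¹ * ((N : ℝ)⁻¹ * s)
          = 0 := by
        field_simp
        ring
      constructor
      · rw [hA m hmN, hBsucc m hmN, ← hgm]
        have expand : (A m - ((N : ℝ) + s)⁻¹ • (A m * vecMulVec gm gm * A m))
              * (B m + (N : ℝ)⁻¹ • vecMulVec gm gm)
            = A m * B m
              + ((N : ℝ)⁻¹ - ((N : ℝ) + s)⁻¹
                  - ((N : ℝ) + s)⁻¹ * ((N : ℝ)⁻¹ * s)) • vecMulVec a gm := by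
          rw [e1]
          simp only [Matrix.sub_mul, Matrix.mul_add, smul_mul_assoc,
            mul_smul_comm, e2, e3, e4, smul_smul]
          module
        rw [hs, ha, hgm] at expand
        rw [expand, ← hgm, ← ha, ← hs, hAB, hcoef, zero_smul, add_zero]
      · rw [hA m hmN, transpose_sub, transpose_smul, e1, vmv_transpose, hAs, ← e1]
  -- the vector recurrence follows A
  have hkA : ∀ m, m ≤ N → k m = A m *ᵥ v := by
    intro m
    induction m with
    | zero => intro _; rw [hk0, hA0, smul_mulVec, one_mulVec]
    | succ m ih =>
      intro hm
      have hmN : m < N := Nat.lt_of_succ_le hm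
      rw [hk m hmN, ih (le_of_lt hmN), hA m hmN, Matrix.sub_mulVec,
        smul_mulVec, ← Matrix.mulVec_mulVec, ← Matrix.mulVec_mulVec,
        vmv_mulVec, Matrix.mulVec_smul, smul_smul, div_eq_inv_mul]
  refine ⟨hkA, ?_⟩
  have hABN := (key N le_rfl).1
  have hBN : B N = l • 1 + ((1 : ℝ) / N) • ∑ i, vecMulVec (g i) (g i) := by
    simp [hBdef, Fin.is_lt, one_div]
  rw [hkA N le_rfl, ← hBN, Matrix.inv_eq_left_inv hABN]
end

section
/- Let λ > 0 be real, N a positive natural number, g ∈ ℝ^D, and v ∈ ℝ^D, and suppose all N per-example gradients are equal to g. Define A_0 = λ^{-1} I_D and A_{m+1} = A_m − (A_m g gᵀ A_m) / (N + gᵀ A_m g) for 0 ≤ m < N. Define the coupled vector recurrences o_0 = λ^{-1} g, k_0 = λ^{-1} v, and for 0 ≤ m < N: o_{m+1} = o_m − o_m · (gᵀ o_m) / (N + gᵀ o_m) and k_{m+1} = k_m − o_m · (gᵀ k_m) / (N + gᵀ o_m). Then for every m ≤ N, o_m = A_m g and k_m = A_m v, all denominators N + gᵀ o_m are strictly positive,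 and in particular k_N = (λ I_D + g gᵀ)^{-1} v. (Proposition 2: the coupled IHVP-WoodFisher recurrences converge to the inverse-Hessian–vector product when consecutive gradients coincide.) -/
open Matrix

lemma GmulVec {D : ℕ} (g x : Fin D → ℝ) : vecMulVec g g *ᵥ x = (g ⬝ᵥ x) • g := by
  funext i
  simp only [mulVec, vecMulVec_apply, dotProduct, Pi.smul_apply, smul_eq_mul]
  rw [Finset.sum_mul]
  exact Finset.sum_congr rfl fun j _ => by ring

lemma GG {D : ℕ} (g : Fin D → ℝ) :
    vecMulVec g g * vecMulVec g g = (g ⬝ᵥ g) • vecMulVec g g := by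
  ext i k
  simp only [Matrix.mul_apply, vecMulVec_apply, Matrix.smul_apply, smul_eq_mul, dotProduct]
  rw [Finset.sum_mul]
  exact Finset.sum_congr rfl fun j _ => by ring

/-- Proposition 2 (exact version with coinciding gradients): when all `N`
per-example gradients equal a common vector `g`, the coupled IHVP-WoodFisher
recurrences satisfy `o m = A m g` and `k m = A m v` for all `m ≤ N`, all
denominators `N + gᵀ o m` are strictly positive, and in particular
`k N = (λ I + g gᵀ)⁻¹ v` is the inverse-Hessian–vector product. -/
theorem ihvp_woodfisher_coupled_constant_gradient
    (D : ℕ) (l : ℝ) (hl : 0 < l) (N : ℕ) (hN : 0 < N)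
    (g v : Fin D → ℝ)
    (A : ℕ → Matrix (Fin D) (Fin D) ℝ)
    (hA0 : A 0 = l⁻¹ • 1)
    (hA : ∀ m, m < N →
      A (m + 1) = A m -
        ((N : ℝ) + g ⬝ᵥ (A m *ᵥ g))⁻¹ • (A m * vecMulVec g g * A m))
    (o k : ℕ → Fin D → ℝ)
    (ho0 : o 0 = l⁻¹ • g)
    (hk0 : k 0 = l⁻¹ • v)
    (ho : ∀ m, m < N →
      o (m + 1) = o m - ((g ⬝ᵥ o m) / ((N : ℝ) + g ⬝ᵥ o m)) • o m)
    (hk : ∀ m, m < N →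
      k (m + 1) = k m - ((g ⬝ᵥ k m) / ((N : ℝ) + g ⬝ᵥ o m)) • o m) :
    (∀ m ≤ N, o m = A m *ᵥ g) ∧
    (∀ m ≤ N, k m = A m *ᵥ v) ∧
    (∀ m ≤ N, 0 < (N : ℝ) + g ⬝ᵥ o m) ∧
    k N = (l • 1 + vecMulVec g g)⁻¹ *ᵥ v := by
  set G := vecMulVec g g with hGdef
  set s := g ⬝ᵥ g with hsdef
  have hs : 0 ≤ s := by
    rw [hsdef]
    exact Finset.sum_nonneg fun i _ => mul_self_nonneg _
  have hlne : l ≠ 0 := ne_of_gt hl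
  have hNpos : (0:ℝ) < N := by exact_mod_cast hN
  set a : ℕ → ℝ := fun m => N / (N * l + m * s) with ha
  set c : ℕ → ℝ := fun m => m / (l * (N * l + m * s)) with hc
  have hden : ∀ m : ℕ, (0:ℝ) < N * l + m * s := by
    intro m
    have : (0:ℝ) ≤ (m:ℝ) * s := mul_nonneg (by positivity) hs
    nlinarith
  have hdne : ∀ m : ℕ, (N:ℝ) * l + m * s ≠ 0 := fun m => ne_of_gt (hden m)
  have hapos : ∀ m : ℕ, 0 < a m := fun m => div_pos hNpos (hden m)
  have hacs : ∀ m : ℕ, l⁻¹ - c m * s = a m := by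
    intro m
    rw [ha, hc]
    field_simp
    ring
  have hNas : ∀ m : ℕ, 0 < (N:ℝ) + a m * s := fun m =>
    add_pos_of_pos_of_nonneg hNpos (mul_nonneg (hapos m).le hs)
  have hNasne : ∀ m : ℕ, (N:ℝ) + a m * s ≠ 0 := fun m => ne_of_gt (hNas m)
  have hAg : ∀ m : ℕ, A m = l⁻¹ • 1 - c m • G → A m *ᵥ g = a m • g := by
    intro m hAm
    rw [hAm, sub_mulVec, smul_mulVec, one_mulVec, smul_mulVec, GmulVec,
      ← hsdef, smul_smul, ← sub_smul, hacs]
  have key : ∀ m, m ≤ N →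
      A m = l⁻¹ • (1 : Matrix (Fin D) (Fin D) ℝ) - c m • G ∧ o m = a m • g ∧
        k m = A m *ᵥ v := by
    intro m
    induction m with
    | zero =>
      intro _
      have hc0 : c 0 = 0 := by simp [hc]
      have ha0 : a 0 = l⁻¹ := by
        rw [ha]
        simp only [Nat.cast_zero, zero_mul, add_zero]
        rw [div_mul_eq_div_div, div_self (ne_of_gt hNpos), one_div]
      refine ⟨by rw [hA0, hc0]; simp, by rw [ho0, ha0], ?_⟩
      rw [hk0, hA0, smul_mulVec, one_mulVec]
    | succ m ih =>
      intro hm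
      have hmlt : m < N := hm
      obtain ⟨hAm, hom, hkm⟩ := ih (le_of_lt hmlt)
      have hAmg : A m *ᵥ g = a m • g := hAg m hAm
      have hgo : g ⬝ᵥ o m = a m * s := by
        rw [hom, dotProduct_smul, smul_eq_mul, ← hsdef]
      have hgAg : g ⬝ᵥ (A m *ᵥ g) = a m * s := by
        rw [hAmg, dotProduct_smul, smul_eq_mul, ← hsdef]
      have h2 : (l⁻¹ • (1 : Matrix (Fin D) (Fin D) ℝ) - c m • G) * G = a m • G := by
        rw [Matrix.sub_mul, Matrix.smul_mul, Matrix.one_mul, Matrix.smul_mul, hGdef, GG,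
          ← hsdef, smul_smul, ← sub_smul, hacs]
      have h3 : G * (l⁻¹ • (1 : Matrix (Fin D) (Fin D) ℝ) - c m • G) = a m • G := by
        rw [Matrix.mul_sub, Matrix.mul_smul, Matrix.mul_one, Matrix.mul_smul, hGdef, GG,
          ← hsdef, smul_smul, ← sub_smul, hacs]
      have hAGA : A m * G * A m = (a m * a m) • G := by
        rw [hAm, h2, Matrix.smul_mul, h3, smul_smul]
      have hcsucc : c (m+1) = c m + ((N:ℝ) + a m * s)⁻¹ * (a m * a m) := by
        rw [ha, hc]
        push_cast
        field_simp
        ring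
      have hAsucc : A (m+1) = l⁻¹ • 1 - c (m+1) • G := by
        rw [hA m hmlt, hgAg, hAGA, hAm, hcsucc]
        module
      have hasucc : a (m+1) = a m - (a m * s / ((N:ℝ) + a m * s)) * a m := by
        rw [ha]
        push_cast
        field_simp
        ring
      have hosucc : o (m+1) = a (m+1) • g := by
        rw [ho m hmlt, hgo, hom, smul_smul, ← sub_smul, ← hasucc]
      refine ⟨hAsucc, hosucc, ?_⟩
      rw [hk m hmlt, hkm, hgo, hom, hAsucc, hAm]
      have hgAv : g ⬝ᵥ ((l⁻¹ • (1 : Matrix (Fin D) (Fin D) ℝ) - c m • G) *ᵥ v)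
          = a m * (g ⬝ᵥ v) := by
        rw [sub_mulVec, smul_mulVec, one_mulVec, smul_mulVec, GmulVec,
          dotProduct_sub, dotProduct_smul, dotProduct_smul, dotProduct_smul, ← hsdef,
          ← hacs m]
        simp [smul_eq_mul]
        ring
      rw [hgAv]
      simp only [hGdef, sub_mulVec, smul_mulVec, one_mulVec, GmulVec]
      rw [hcsucc]
      simp only [smul_smul]
      match_scalars <;> ring
  have hopos : ∀ m ≤ N, 0 < (N:ℝ) + g ⬝ᵥ o m := by
    intro m hm
    rw [(key m hm).2.1, dotProduct_smul, smul_eq_mul, ← hsdef]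
    exact hNas m
  have hog : ∀ m ≤ N, o m = A m *ᵥ g := by
    intro m hm
    rw [(key m hm).2.1, hAg m (key m hm).1]
  have hAN := (key N le_rfl).1
  have hkN := (key N le_rfl).2.2
  refine ⟨hog, fun m hm => (key m hm).2.2, hopos, ?_⟩
  have hlsne : l + s ≠ 0 := by positivity
  have hright : (l • (1 : Matrix (Fin D) (Fin D) ℝ) + G) * A N = 1 := by
    rw [hAN]
    simp only [Matrix.add_mul, Matrix.mul_sub, Matrix.smul_mul, Matrix.mul_smul,
      Matrix.one_mul, Matrix.mul_one, hGdef, GG]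
    rw [← hsdef, ← hGdef]
    match_scalars
    · field_simp
    · rw [hc]
      push_cast
      field_simp
      ring
  rw [Matrix.inv_eq_right_inv hright]
  exact hkN
end
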